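/- Let P_t(x) = (1/(2πt)) exp(−|x|²/(2t)). For all T₀ ∈ (0,∞), p ∈ ℝ_{≥0}, p' ∈ ℝ_{≥0}, and y ∈ ℝ²: ∫_{ℝ²} |x'|^{p'} P_{T₀}(x') / (1 + |y − x'|^p) dx' ≤ C(p,p') (T₀^{p'/2} + T₀^{(p'+p)/2}) / (1 + |y|^p). -/

import Mathlib

open MeasureTheory

noncomputable def heatK (t : ℝ) (x : EuclideanSpace ℝ (Fin 2)) : ℝ :=
  (2 * Real.pi * t)⁻¹ * Real.exp (-‖x‖ ^ 2 / (2 * t))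

/-! Peetre's inequality `1 + ‖y‖^p ≤ 2^p (1 + ‖y - x‖^p)(1 + ‖x‖^p)` moves the weight from `y - x'`
to `y`, at the price of the extra moment `‖x'‖^{p'+p}`. A moment `‖x‖^q P_T(x)` is bounded pointwise
by `C_q T^{q/2} P_{2T}(x)`, since `u^{q/2} ≤ ⌈q/2⌉! e^u` for `u = ‖x‖²/(8T)`; integrating against
the probability density `P_{2T}` gives the bound. -/

open Real
open scoped Nat

lemma rpow_le_factorial_ceil_mul_exp {b u : ℝ} (hb : 0 ≤ b) (hu : 0 ≤ u) :
    u ^ b ≤ ⌈b⌉₊ ! * exp u := by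
  rcases le_or_gt u 1 with hu1 | hu1
  · calc u ^ b ≤ 1 * 1 := by rw [one_mul]; exact rpow_le_one hu hu1 hb
      _ ≤ ⌈b⌉₊ ! * exp u :=
        mul_le_mul (mod_cast Nat.one_le_of_lt (Nat.factorial_pos _)) (one_le_exp hu) zero_le_one
          (by positivity)
  · calc u ^ b ≤ u ^ (⌈b⌉₊ : ℝ) := rpow_le_rpow_of_exponent_le hu1.le (Nat.le_ceil b)
      _ = u ^ ⌈b⌉₊ := rpow_natCast u _
      _ ≤ ⌈b⌉₊ ! * exp u := by
        rw [← div_le_iff₀' (by positivity)]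
        exact pow_div_factorial_le_exp _ hu _

noncomputable def momentConst (q : ℝ) : ℝ := 8 ^ (q / 2) * ⌈q / 2⌉₊ !

lemma momentConst_pos (q : ℝ) : 0 < momentConst q := by
  unfold momentConst; positivity

lemma rpow_mul_exp_neg_sq_le {q T r : ℝ} (hq : 0 ≤ q) (hT : 0 < T) (hr : 0 ≤ r) :
    r ^ q * exp (-r ^ 2 / (2 * T)) ≤ momentConst q * T ^ (q / 2) * exp (-r ^ 2 / (4 * T)) := by
  set u := r ^ 2 / (8 * T)
  have hu : 0 ≤ u := by positivity
  have hr_pow : r ^ q = 8 ^ (q / 2) * T ^ (q / 2) * u ^ (q / 2) := by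
    rw [← mul_rpow (by norm_num) hT.le, ← mul_rpow (by positivity) hu,
      show 8 * T * u = r ^ 2 by simp only [u]; field_simp, ← rpow_natCast, ← rpow_mul hr]
    congr 1; ring
  have hexp : exp u * exp (-r ^ 2 / (2 * T)) ≤ exp (-r ^ 2 / (4 * T)) := by
    rw [← exp_add, exp_le_exp, div_add_div _ _ (by positivity) (by positivity),
      div_le_div_iff₀ (by positivity) (by positivity)]
    nlinarith [sq_nonneg r, mul_pos hT hT]
  calc r ^ q * exp (-r ^ 2 / (2 * T))
      = 8 ^ (q / 2) * T ^ (q / 2) * (u ^ (q / 2) * exp (-r ^ 2 / (2 * T))) := by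
        rw [hr_pow]; ring
    _ ≤ 8 ^ (q / 2) * T ^ (q / 2) * (⌈q / 2⌉₊ ! * exp u * exp (-r ^ 2 / (2 * T))) := by
        gcongr
        exact rpow_le_factorial_ceil_mul_exp (by linarith) hu
    _ = momentConst q * T ^ (q / 2) * (exp u * exp (-r ^ 2 / (2 * T))) := by
        unfold momentConst; ring
    _ ≤ momentConst q * T ^ (q / 2) * exp (-r ^ 2 / (4 * T)) := by
        have := momentConst_pos q
        gcongr

lemma heatK_nonneg {t : ℝ} (ht : 0 ≤ t) (x : EuclideanSpace ℝ (Fin 2)) : 0 ≤ heatK t x := by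
  unfold heatK; positivity

lemma integral_heatK {t : ℝ} (ht : 0 < t) : ∫ x, heatK t x = 1 := by
  have hK : ∀ x, heatK t x = (2 * π * t)⁻¹ * exp (-(1 / (2 * t)) * ‖x‖ ^ 2) := by
    intro x; unfold heatK; congr 2; ring
  simp_rw [hK]
  rw [integral_const_mul, GaussianFourier.integral_rexp_neg_mul_sq_norm (by positivity)]
  simp only [finrank_euclideanSpace, Fintype.card_fin]
  norm_num
  field_simp

lemma integrable_heatK {t : ℝ} (ht : 0 < t) : Integrable (heatK t) :=
  Integrable.of_integral_ne_zero (by rw [integral_heatK ht]; exact one_ne_zero)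

lemma rpow_norm_mul_heatK_le {q T : ℝ} (hq : 0 ≤ q) (hT : 0 < T) (x : EuclideanSpace ℝ (Fin 2)) :
    ‖x‖ ^ q * heatK T x ≤ 2 * momentConst q * T ^ (q / 2) * heatK (2 * T) x := by
  have h := rpow_mul_exp_neg_sq_le hq hT (norm_nonneg x)
  have hK : heatK (2 * T) x = (2 * (2 * π * T))⁻¹ * exp (-‖x‖ ^ 2 / (4 * T)) := by
    unfold heatK; ring_nf
  rw [hK]
  unfold heatK
  calc ‖x‖ ^ q * ((2 * π * T)⁻¹ * exp (-‖x‖ ^ 2 / (2 * T)))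
      = (2 * π * T)⁻¹ * (‖x‖ ^ q * exp (-‖x‖ ^ 2 / (2 * T))) := by ring
    _ ≤ (2 * π * T)⁻¹ * (momentConst q * T ^ (q / 2) * exp (-‖x‖ ^ 2 / (4 * T))) := by gcongr
    _ = 2 * momentConst q * T ^ (q / 2) * ((2 * (2 * π * T))⁻¹ * exp (-‖x‖ ^ 2 / (4 * T))) := by
      field_simp

lemma rpow_add_le_two_rpow_mul {a b p : ℝ} (ha : 0 ≤ a) (hb : 0 ≤ b) (hp : 0 ≤ p) :
    (a + b) ^ p ≤ 2 ^ p * (a ^ p + b ^ p) := by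
  have hmax : a + b ≤ 2 * max a b := by
    linarith [le_max_left a b, le_max_right a b]
  calc (a + b) ^ p ≤ (2 * max a b) ^ p := by gcongr
    _ = 2 ^ p * max a b ^ p := mul_rpow (by norm_num) (ha.trans (le_max_left a b))
    _ ≤ 2 ^ p * (a ^ p + b ^ p) := by
        gcongr
        rcases le_total a b with h | h
        · rw [max_eq_right h]; linarith [rpow_nonneg ha p]
        · rw [max_eq_left h]; linarith [rpow_nonneg hb p]

lemma one_add_norm_rpow_le {E : Type*} [SeminormedAddCommGroup E] {p : ℝ} (hp : 0 ≤ p) (x y : E) :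
    1 + ‖y‖ ^ p ≤ 2 ^ p * (1 + ‖y - x‖ ^ p) * (1 + ‖x‖ ^ p) := by
  have hy : ‖y‖ ^ p ≤ 2 ^ p * (‖y - x‖ ^ p + ‖x‖ ^ p) :=
    calc ‖y‖ ^ p ≤ (‖y - x‖ + ‖x‖) ^ p := by gcongr; exact norm_le_norm_sub_add y x
      _ ≤ 2 ^ p * (‖y - x‖ ^ p + ‖x‖ ^ p) :=
        rpow_add_le_two_rpow_mul (norm_nonneg _) (norm_nonneg _) hp
  have h2 : 1 ≤ (2 : ℝ) ^ p := one_le_rpow (by norm_num) hp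
  have ha := rpow_nonneg (norm_nonneg (y - x)) p
  have hb := rpow_nonneg (norm_nonneg x) p
  nlinarith [mul_nonneg (mul_nonneg ha hb) (zero_le_one.trans h2)]

lemma rpow_norm_mul_heatK_div_le {p p' T : ℝ} (hp : 0 ≤ p) (hp' : 0 ≤ p') (hT : 0 < T)
    (x y : EuclideanSpace ℝ (Fin 2)) :
    ‖x‖ ^ p' * heatK T x / (1 + ‖y - x‖ ^ p) ≤
      2 ^ (p + 1) * (momentConst p' * T ^ (p' / 2) + momentConst (p' + p) * T ^ ((p' + p) / 2)) /
        (1 + ‖y‖ ^ p) * heatK (2 * T) x := by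
  have hD : 0 < 1 + ‖y‖ ^ p := by positivity
  have hDx : 0 < 1 + ‖y - x‖ ^ p := by positivity
  have hf : 0 ≤ ‖x‖ ^ p' * heatK T x := mul_nonneg (by positivity) (heatK_nonneg hT.le x)
  have hmoments : ‖x‖ ^ p' * (1 + ‖x‖ ^ p) * heatK T x ≤
      2 * (momentConst p' * T ^ (p' / 2) + momentConst (p' + p) * T ^ ((p' + p) / 2)) *
        heatK (2 * T) x := by
    rw [mul_one_add, ← rpow_add_of_nonneg (norm_nonneg x) hp' hp, add_mul]
    linarith [rpow_norm_mul_heatK_le hp' hT x, rpow_norm_mul_heatK_le (add_nonneg hp' hp) hT x]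
  calc ‖x‖ ^ p' * heatK T x / (1 + ‖y - x‖ ^ p)
      ≤ 2 ^ p * (‖x‖ ^ p' * (1 + ‖x‖ ^ p) * heatK T x) / (1 + ‖y‖ ^ p) := by
        rw [div_le_div_iff₀ hDx hD]
        nlinarith [mul_le_mul_of_nonneg_left (one_add_norm_rpow_le hp x y) hf]
    _ ≤ 2 ^ p * (2 * (momentConst p' * T ^ (p' / 2) + momentConst (p' + p) * T ^ ((p' + p) / 2)) *
          heatK (2 * T) x) / (1 + ‖y‖ ^ p) := by gcongr
    _ = _ := by rw [rpow_add_one two_ne_zero]; ring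

theorem stmt_8 (p p' : ℝ) (hp : 0 ≤ p) (hp' : 0 ≤ p') :
    ∃ C : ℝ, 0 < C ∧ ∀ T₀ : ℝ, 0 < T₀ → ∀ y : EuclideanSpace ℝ (Fin 2),
      (∫ x' : EuclideanSpace ℝ (Fin 2),
          ‖x'‖ ^ p' * heatK T₀ x' / (1 + ‖y - x'‖ ^ p))
        ≤ C * (T₀ ^ (p'/2) + T₀ ^ ((p' + p)/2)) / (1 + ‖y‖ ^ p) := by
  have hM₁ := momentConst_pos p'
  have hM₂ := momentConst_pos (p' + p)
  refine ⟨2 ^ (p + 1) * (momentConst p' + momentConst (p' + p)), by positivity, fun T hT y ↦ ?_⟩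
  set S := momentConst p' * T ^ (p' / 2) + momentConst (p' + p) * T ^ ((p' + p) / 2)
  have hS : S ≤ (momentConst p' + momentConst (p' + p)) * (T ^ (p' / 2) + T ^ ((p' + p) / 2)) := by
    nlinarith [rpow_nonneg hT.le (p' / 2), rpow_nonneg hT.le ((p' + p) / 2)]
  calc (∫ x, ‖x‖ ^ p' * heatK T x / (1 + ‖y - x‖ ^ p))
      ≤ ∫ x, 2 ^ (p + 1) * S / (1 + ‖y‖ ^ p) * heatK (2 * T) x :=
        integral_mono_of_nonneg
          (.of_forall fun x ↦ div_nonneg (mul_nonneg (by positivity) (heatK_nonneg hT.le x))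
            (by positivity))
          ((integrable_heatK (by positivity)).const_mul _)
          (.of_forall fun x ↦ rpow_norm_mul_heatK_div_le hp hp' hT x y)
    _ = 2 ^ (p + 1) * S / (1 + ‖y‖ ^ p) := by
        rw [integral_const_mul, integral_heatK (by positivity), mul_one]
    _ ≤ _ := by
        rw [mul_assoc]
        gcongr
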